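/- Let κ be a regular uncountable cardinal and let U be a uniform ultrafilter on κ. If U has an almost-decreasing generating sequence ⟨A_i : i < θ⟩ with θ a regular cardinal and θ > κ, then the character of U equals θ: {A_i : i < θ} is a base for U of cardinality θ and no base for U has cardinality less than θ. -/

import Mathlib

universe u

open Cardinal Set

/-- `A ⊆* B` below the cardinal `κ`: the difference `A \ B` is bounded below `κ`
(where `κ` is identified with its set of ordinals `Set.Iio κ.ord`). -/
def AlmostSub (κ : Cardinal.{u}) (A B : Set Ordinal.{u}) : Prop :=
  ∃ β, β < κ.ord ∧ A \ B ⊆ Set.Iio β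

/-- An ultrafilter on the cardinal `κ`, identified with its set of ordinals `Set.Iio κ.ord`. -/
structure UltrafilterOn (κ : Cardinal.{u}) : Type (u + 1) where
  sets : Set (Set Ordinal.{u})
  sets_subset : ∀ A ∈ sets, A ⊆ Set.Iio κ.ord
  univ_mem : Set.Iio κ.ord ∈ sets
  superset_mem : ∀ A ∈ sets, ∀ B, B ⊆ Set.Iio κ.ord → A ⊆ B → B ∈ sets
  inter_mem : ∀ A ∈ sets, ∀ B ∈ sets, A ∩ B ∈ sets
  empty_not_mem : ∅ ∉ sets
  mem_or_compl_mem : ∀ A, A ⊆ Set.Iio κ.ord → A ∈ sets ∨ Set.Iio κ.ord \ A ∈ sets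

namespace UltrafilterOn

variable {κ : Cardinal.{u}}

/-- A uniform ultrafilter: every member has cardinality `κ`. -/
def IsUniform (U : UltrafilterOn κ) : Prop :=
  ∀ A ∈ U.sets, #A = Cardinal.lift.{u + 1, u} κ

/-- `κ`-completeness: `U` is closed under intersections of fewer than `κ` many of its members. -/
def IsComplete (U : UltrafilterOn κ) : Prop :=
  ∀ S : Set (Set Ordinal.{u}), S.Nonempty → S ⊆ U.sets →
    #S < Cardinal.lift.{u + 1, u} κ → ⋂₀ S ∈ U.sets

/-- Nonprincipal: no singleton is a member. -/
def IsNonprincipal (U : UltrafilterOn κ) : Prop :=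
  ∀ β : Ordinal.{u}, {β} ∉ U.sets

/-- A base for `U`: a subfamily `B ⊆ U` such that every member of `U` almost contains
a member of `B`. -/
def IsBase (U : UltrafilterOn κ) (B : Set (Set Ordinal.{u})) : Prop :=
  B ⊆ U.sets ∧ ∀ X ∈ U.sets, ∃ Y ∈ B, AlmostSub κ Y X

/-- The character of `U`: the least cardinality of a base for `U`. -/
noncomputable def char (U : UltrafilterOn κ) : Cardinal.{u + 1} :=
  sInf {c | ∃ B, U.IsBase B ∧ #B = c}

/-- `⟨A i : i < θord⟩` is an almost-decreasing generating sequence for `U`: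
its entries are members of `U`, it is `⊆*`-decreasing, and its range is a base for `U`. -/
def IsADGenSeq (U : UltrafilterOn κ) (θord : Ordinal.{u})
    (A : Ordinal.{u} → Set Ordinal.{u}) : Prop :=
  (∀ i, i < θord → A i ∈ U.sets) ∧
  (∀ i j, i ≤ j → j < θord → AlmostSub κ (A j) (A i)) ∧
  U.IsBase (A '' Set.Iio θord)

/-- A normal measure on `κ`: a `κ`-complete nonprincipal ultrafilter such that every
function regressive on a member of `U` is constant on a member of `U`. -/
def IsNormalMeasure (U : UltrafilterOn κ) : Prop :=
  U.IsComplete ∧ U.IsNonprincipal ∧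
  ∀ f : Ordinal.{u} → Ordinal.{u},
    (∃ X ∈ U.sets, ∀ α ∈ X, f α < α) → ∃ Y ∈ U.sets, ∃ c, ∀ α ∈ Y, f α = c

end UltrafilterOn

/-- `κ` is a measurable cardinal: it is uncountable and carries a `κ`-complete
nonprincipal ultrafilter. -/
def IsMeasurableCard (κ : Cardinal.{u}) : Prop :=
  ℵ₀ < κ ∧ ∃ U : UltrafilterOn κ, U.IsComplete ∧ U.IsNonprincipal

/-- `f <* g`: eventual (pointwise) domination below `ρord`. -/
def EvDomLt (ρord : Ordinal.{u}) (f g : Ordinal.{u} → Ordinal.{u}) : Prop :=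
  ∃ i₀, i₀ < ρord ∧ ∀ i, i₀ ≤ i → i < ρord → f i < g i

/-- Membership in the product `∏_{i < ρord} lam i` (of cardinals `lam i`). -/
def InProd (ρord : Ordinal.{u}) (lam : Ordinal.{u} → Cardinal.{u})
    (f : Ordinal.{u} → Ordinal.{u}) : Prop :=
  ∀ i, i < ρord → f i < (lam i).ord

/-- `⟨g η : η < ν⟩` is a scale of length `ν` in `∏_{i < ρord} lam i`:
a `<*`-increasing and `<*`-cofinal sequence in the product. -/
def IsScale (ρord : Ordinal.{u}) (lam : Ordinal.{u} → Cardinal.{u}) (ν : Cardinal.{u})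
    (g : Ordinal.{u} → Ordinal.{u} → Ordinal.{u}) : Prop :=
  (∀ η, η < ν.ord → InProd ρord lam (g η)) ∧
  (∀ η₁ η₂, η₁ < η₂ → η₂ < ν.ord → EvDomLt ρord (g η₁) (g η₂)) ∧
  ∀ f, InProd ρord lam f → ∃ η, η < ν.ord ∧ EvDomLt ρord f (g η)

/-- `supBelow μ i = sup_{i' < i} μ i'`. -/
noncomputable def supBelow (μ : Ordinal.{u} → Cardinal.{u}) (i : Ordinal.{u}) : Cardinal.{u} :=
  sSup {c | ∃ i', i' < i ∧ c = μ i'}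

/-!
Suppose some base `B` had fewer than `θ` members. Each `Y ∈ B` almost contains some `A j`, and by
regularity of `θ` all these indices lie below a single `i < θ`, so that `A i` is almost contained
in every member of `B`, hence in every member of `U`. This is impossible in a uniform ultrafilter:
split `A i` into two disjoint pieces of size `κ`; whichever of the first piece and its complement
lies in `U` would almost contain `A i`, leaving one of the pieces bounded in `κ`.
-/

theorem AlmostSub.trans {κ : Cardinal.{u}} {A B C : Set Ordinal.{u}}
    (hAB : AlmostSub κ A B) (hBC : AlmostSub κ B C) : AlmostSub κ A C := by
  obtain ⟨β₁, hβ₁, hAB⟩ := hAB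
  obtain ⟨β₂, hβ₂, hBC⟩ := hBC
  refine ⟨max β₁ β₂, max_lt hβ₁ hβ₂, fun x hx => ?_⟩
  by_cases hxB : x ∈ B
  · exact (mem_Iio.mp (hBC ⟨hxB, hx.2⟩)).trans_le (le_max_right _ _)
  · exact (mem_Iio.mp (hAB ⟨hx.1, hxB⟩)).trans_le (le_max_left _ _)

theorem mk_lt_lift_of_subset_Iio {κ : Cardinal.{u}} {T : Set Ordinal.{u}} {β : Ordinal.{u}}
    (hβ : β < κ.ord) (hT : T ⊆ Iio β) : #T < Cardinal.lift.{u + 1} κ :=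
  calc #T ≤ #(Iio β) := mk_le_mk_of_subset hT
    _ = Cardinal.lift.{u + 1} β.card := mk_Iio_ordinal β
    _ < Cardinal.lift.{u + 1} κ := lift_lt.mpr (lt_ord.mp hβ)

theorem Cardinal.exists_set_mk_eq_mk_compl_eq {α : Type*} (h : ℵ₀ ≤ #α) :
    ∃ s : Set α, #s = #α ∧ #(sᶜ : Set α) = #α := by
  obtain ⟨e⟩ : Nonempty (α ≃ α ⊕ α) := Cardinal.eq.mp (by simp [add_eq_self h])
  refine ⟨e ⁻¹' range Sum.inl, ?_, ?_⟩
  · rw [mk_preimage_equiv, mk_range_eq _ Sum.inl_injective]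
  · rw [← preimage_compl, compl_range_inl, mk_preimage_equiv, mk_range_eq _ Sum.inr_injective]

theorem Set.exists_disjoint_subsets_mk_eq {α : Type*} {t : Set α} (ht : ℵ₀ ≤ #t) :
    ∃ S₁ S₂, S₁ ⊆ t ∧ S₂ ⊆ t ∧ Disjoint S₁ S₂ ∧ #S₁ = #t ∧ #S₂ = #t := by
  obtain ⟨s, hs, hsc⟩ := Cardinal.exists_set_mk_eq_mk_compl_eq ht
  refine ⟨(↑) '' s, (↑) '' sᶜ, Subtype.coe_image_subset t s, Subtype.coe_image_subset t sᶜ,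
    (disjoint_image_iff Subtype.val_injective).mpr disjoint_compl_right, ?_, ?_⟩
  · rwa [mk_image_eq Subtype.val_injective]
  · rwa [mk_image_eq Subtype.val_injective]

theorem Cardinal.IsRegular.exists_upperBound_lt_ord {ι : Type*} {c : Cardinal.{u}}
    (hc : c.IsRegular) {f : ι → Ordinal.{u}} (hι : Cardinal.lift.{u} #ι < Cardinal.lift c)
    (hf : ∀ i, f i < c.ord) : ∃ b < c.ord, ∀ i, f i ≤ b := by
  refine ⟨⨆ i, f i, Ordinal.lift_iSup_lt_of_lt_cof ?_ hf,
    le_ciSup ⟨c.ord, forall_mem_range.mpr fun i => (hf i).le⟩⟩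
  rwa [← Ordinal.lift_cof, hc.cof_ord]

namespace UltrafilterOn

variable {κ : Cardinal.{u}} {U : UltrafilterOn κ}

theorem IsUniform.not_forall_almostSub (hκ : ℵ₀ ≤ κ) (hU : U.IsUniform) {t : Set Ordinal.{u}}
    (ht : t ∈ U.sets) : ¬ ∀ X ∈ U.sets, AlmostSub κ t X := by
  intro hall
  obtain ⟨S₁, S₂, hS₁, hS₂, hdisj, hcard₁, hcard₂⟩ :=
    exists_disjoint_subsets_mk_eq (t := t) (by rw [hU t ht]; exact aleph0_le_lift.mpr hκ)
  rcases U.mem_or_compl_mem S₁ (hS₁.trans (U.sets_subset t ht)) with hmem | hmem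
  · obtain ⟨β, hβ, hb⟩ := hall S₁ hmem
    have : S₂ ⊆ Iio β := fun x hx => hb ⟨hS₂ hx, hdisj.notMem_of_mem_right hx⟩
    exact (mk_lt_lift_of_subset_Iio hβ this).ne (hcard₂.trans (hU t ht))
  · obtain ⟨β, hβ, hb⟩ := hall _ hmem
    have : S₁ ⊆ Iio β := fun x hx => hb ⟨hS₁ hx, fun hx' => hx'.2 hx⟩
    exact (mk_lt_lift_of_subset_Iio hβ this).ne (hcard₁.trans (hU t ht))

theorem char_eq_of_isBase {B : Set (Set Ordinal.{u})} (hB : U.IsBase B)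
    (hmin : ∀ B', U.IsBase B' → #B ≤ #B') : U.char = #B :=
  le_antisymm (csInf_le' ⟨B, hB, rfl⟩)
    (le_csInf ⟨_, B, hB, rfl⟩ (by rintro _ ⟨B', hB', rfl⟩; exact hmin B' hB'))

namespace IsADGenSeq

variable {θord : Ordinal.{u}} {A : Ordinal.{u} → Set Ordinal.{u}}

theorem exists_not_almostSub (hκ : ℵ₀ ≤ κ) (hU : U.IsUniform) (hA : U.IsADGenSeq θord A)
    {i : Ordinal.{u}} (hi : i < θord) : ∃ j < θord, ¬ AlmostSub κ (A i) (A j) := by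
  by_contra! hall
  refine hU.not_forall_almostSub hκ (hA.1 i hi) fun X hX => ?_
  obtain ⟨_, ⟨j, hj, rfl⟩, hjX⟩ := hA.2.2.2 X hX
  exact (hall j hj).trans hjX

theorem lift_le_mk_of_isBase {θ : Cardinal.{u}} (hκ : ℵ₀ ≤ κ) (hU : U.IsUniform)
    (hθ : θ.IsRegular) (hA : U.IsADGenSeq θ.ord A) {B : Set (Set Ordinal.{u})}
    (hB : U.IsBase B) : Cardinal.lift.{u + 1} θ ≤ #B := by
  by_contra! hlt
  have hindex : ∀ Y : B, ∃ j < θ.ord, AlmostSub κ (A j) Y := fun Y => by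
    obtain ⟨_, ⟨j, hj, rfl⟩, hjY⟩ := hA.2.2.2 Y (hB.1 Y.2)
    exact ⟨j, hj, hjY⟩
  choose h hhθ hhY using hindex
  obtain ⟨i, hiθ, hhi⟩ := hθ.exists_upperBound_lt_ord (by rwa [lift_id'.{u, u + 1}]) hhθ
  obtain ⟨j, hjθ, hij⟩ := hA.exists_not_almostSub hκ hU hiθ
  obtain ⟨Y, hY, hYj⟩ := hB.2 (A j) (hA.1 j hjθ)
  exact hij (((hA.2.1 _ i (hhi ⟨Y, hY⟩) hiθ).trans (hhY ⟨Y, hY⟩)).trans hYj)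

end IsADGenSeq

end UltrafilterOn

theorem statement5_general (κ θ : Cardinal.{u}) (hκunc : ℵ₀ < κ)
    (U : UltrafilterOn κ) (hU : U.IsUniform)
    (hθreg : θ.IsRegular)
    (A : Ordinal.{u} → Set Ordinal.{u}) (hA : U.IsADGenSeq θ.ord A) :
    U.IsBase (A '' Set.Iio θ.ord) ∧
    #(A '' Set.Iio θ.ord) = Cardinal.lift.{u + 1, u} θ ∧
    (∀ B, U.IsBase B → Cardinal.lift.{u + 1, u} θ ≤ #B) ∧
    U.char = Cardinal.lift.{u + 1, u} θ := by
  have hbase := hA.2.2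
  have hlower : ∀ B, U.IsBase B → Cardinal.lift.{u + 1} θ ≤ #B :=
    fun _ hB => hA.lift_le_mk_of_isBase hκunc.le hU hθreg hB
  have hcard : #(A '' Iio θ.ord) = Cardinal.lift.{u + 1} θ := by
    refine le_antisymm ?_ (hlower _ hbase)
    calc #(A '' Iio θ.ord) ≤ #(Iio θ.ord) := mk_image_le
      _ = Cardinal.lift.{u + 1} θ := by rw [mk_Iio_ordinal, card_ord]
  refine ⟨hbase, hcard, hlower, ?_⟩
  rw [U.char_eq_of_isBase hbase (hcard ▸ hlower), hcard]

/-- if a uniform ultrafilter `U` on a regular uncountable cardinal `κ` has an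
almost-decreasing generating sequence `⟨A i : i < θ⟩` with `θ` regular and `θ > κ`, then the
character of `U` equals `θ`: `{A i : i < θ}` is a base for `U` of cardinality `θ` and no base
for `U` has cardinality less than `θ`. -/
theorem statement5 (κ θ : Cardinal.{u}) (hκreg : κ.IsRegular) (hκunc : ℵ₀ < κ)
    (U : UltrafilterOn κ) (hU : U.IsUniform)
    (hθreg : θ.IsRegular) (hκθ : κ < θ)
    (A : Ordinal.{u} → Set Ordinal.{u}) (hA : U.IsADGenSeq θ.ord A) :
    U.IsBase (A '' Set.Iio θ.ord) ∧
    #(A '' Set.Iio θ.ord) = Cardinal.lift.{u + 1, u} θ ∧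
    (∀ B, U.IsBase B → Cardinal.lift.{u + 1, u} θ ≤ #B) ∧
    U.char = Cardinal.lift.{u + 1, u} θ :=
  statement5_general κ θ hκunc U hU hθreg A hA
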